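/- arXiv:2203.14368 — 5 statements merged into one kernel-verified Lean document; each statement's English description precedes it below -/
import Mathlib

section
/- Let F = f + ψ where f has block coordinate-wise Lipschitz gradient with constants Lᵢ, ψ : ℝⁿ → ℝ is differentiable and the map d ↦ ψ(x + Uᵢd) is convex for every x and i. Fix an index i, a constant H > Lᵢ/2, a point x, and let d minimize d ↦ f(x) + ⟨Uᵢᵀ∇f(x), d⟩ + (H/2)‖d‖² + ψ(x + Uᵢd) over ℝ^{nᵢ}. Then F(x + Uᵢd) ≤ F(x) − (H − Lᵢ/2)‖d‖². -/
/-!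
Along the block, `h ↦ f (x + U h)` has gradient `Uᵀ ∇f (x + U h)`, so the Lipschitz bound anchored
at `x` gives the descent lemma `f (x + U d) ≤ f x + ⟪Uᵀ∇f x, d⟫ + L/2 ‖d‖²`. Comparing the minimizer
`d` with `(1 - t) d` and using convexity of `ψ` along the block, then letting `t → 0`, gives
`⟪Uᵀ∇f x, d⟫ + H ‖d‖² + ψ (x + U d) ≤ ψ x`. Adding the two inequalities proves the claim.
-/

open scoped RealInnerProductSpace
open Filter Topology Set

section

variable {E F : Type*} [NormedAddCommGroup E] [InnerProductSpace ℝ E]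
  [NormedAddCommGroup F] [InnerProductSpace ℝ F]

theorem hasGradientAt_comp_add_clm [CompleteSpace E] [CompleteSpace F] {f : E → ℝ} {x : E}
    {U : F →L[ℝ] E} {h : F} (hf : DifferentiableAt ℝ f (x + U h)) :
    HasGradientAt (fun h => f (x + U h))
      (ContinuousLinearMap.adjoint U (gradient f (x + U h))) h := by
  rw [hasGradientAt_iff_hasFDerivAt]
  refine (hf.hasGradientAt.hasFDerivAt.comp h (U.hasFDerivAt.const_add x)).congr_fderiv ?_
  ext v
  simp only [InnerProductSpace.toDual_apply_apply, ContinuousLinearMap.adjoint_inner_left,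
    ContinuousLinearMap.comp_apply]

theorem le_add_inner_add_sq_of_norm_gradient_sub_le [CompleteSpace F] {g : F → ℝ} {g' : F → F}
    {L : ℝ} (hg : ∀ h, HasGradientAt g (g' h) h) (hLip : ∀ h, ‖g' h - g' 0‖ ≤ L * ‖h‖) (d : F) :
    g d ≤ g 0 + ⟪g' 0, d⟫ + L / 2 * ‖d‖ ^ 2 := by
  set φ : ℝ → ℝ := fun t => g (t • d) - t * ⟪g' 0, d⟫ - L / 2 * t ^ 2 * ‖d‖ ^ 2
  have hφ : ∀ t, HasDerivAt φ (⟪g' (t • d) - g' 0, d⟫ - L * t * ‖d‖ ^ 2) t := by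
    intro t
    have hline := (hg (t • d)).hasFDerivAt.comp_hasDerivAt t ((hasDerivAt_id t).smul_const d)
    refine ((hline.sub ((hasDerivAt_id t).mul_const ⟪g' 0, d⟫)).sub
      (((hasDerivAt_pow 2 t).const_mul (L / 2)).mul_const (‖d‖ ^ 2))).congr_deriv ?_
    simp only [one_smul, InnerProductSpace.toDual_apply_apply, one_mul, inner_sub_left]
    ring
  have hφ'_nonpos : ∀ t ∈ interior (Ici (0 : ℝ)),
      ⟪g' (t • d) - g' 0, d⟫ - L * t * ‖d‖ ^ 2 ≤ 0 := by
    intro t ht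
    rw [interior_Ici, mem_Ioi] at ht
    refine sub_nonpos.2 ?_
    calc ⟪g' (t • d) - g' 0, d⟫ ≤ ‖g' (t • d) - g' 0‖ * ‖d‖ := real_inner_le_norm _ _
      _ ≤ L * ‖t • d‖ * ‖d‖ := by gcongr; exact hLip _
      _ = L * t * ‖d‖ ^ 2 := by rw [norm_smul, Real.norm_of_nonneg ht.le]; ring
  have hanti : AntitoneOn φ (Ici 0) :=
    antitoneOn_of_hasDerivWithinAt_nonpos (convex_Ici 0)
      (fun t _ => (hφ t).continuousAt.continuousWithinAt)
      (fun t _ => (hφ t).hasDerivWithinAt) hφ'_nonpos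
  have hφ_one_le := hanti (mem_Ici.2 le_rfl) (mem_Ici.2 zero_le_one) zero_le_one
  simp only [φ, one_smul, zero_smul] at hφ_one_le
  linarith

theorem ConvexOn.inner_add_sq_add_le_of_prox_minimizer {φ : F → ℝ} (hφ : ConvexOn ℝ univ φ)
    {g d : F} {H : ℝ}
    (hmin : ∀ d', ⟪g, d⟫ + H / 2 * ‖d‖ ^ 2 + φ d ≤ ⟪g, d'⟫ + H / 2 * ‖d'‖ ^ 2 + φ d') :
    ⟪g, d⟫ + H * ‖d‖ ^ 2 + φ d ≤ φ 0 := by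
  set a := ⟪g, d⟫ + H * ‖d‖ ^ 2 + φ d - φ 0
  have hsmall : ∀ t ∈ Ioo (0 : ℝ) 1, a ≤ H / 2 * ‖d‖ ^ 2 * t := by
    rintro t ⟨ht0, ht1⟩
    have hconv : φ ((1 - t) • d) ≤ (1 - t) * φ d + t * φ 0 := by
      simpa using hφ.2 (mem_univ d) (mem_univ 0) (by linarith : 0 ≤ 1 - t) ht0.le (by ring)
    have htest := hmin ((1 - t) • d)
    rw [real_inner_smul_right, norm_smul, mul_pow, Real.norm_eq_abs, sq_abs] at htest
    have : t * a ≤ t * (H / 2 * ‖d‖ ^ 2 * t) := by nlinarith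
    exact le_of_mul_le_mul_left this ht0
  have hlim : Tendsto (fun t => H / 2 * ‖d‖ ^ 2 * t) (𝓝[>] 0) (𝓝 0) :=
    ((continuous_const_mul _).tendsto' 0 0 (mul_zero _)).mono_left nhdsWithin_le_nhds
  have : a ≤ 0 := ge_of_tendsto hlim (eventually_of_mem (Ioo_mem_nhdsGT one_pos) hsmall)
  linarith

end

theorem stmt2_general {n ni : ℕ} (f ψ : EuclideanSpace ℝ (Fin n) → ℝ)
    (hf : ContDiff ℝ 1 f)
    (U : EuclideanSpace ℝ (Fin ni) →L[ℝ] EuclideanSpace ℝ (Fin n))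
    (L H : ℝ)
    (hLip : ∀ (x : EuclideanSpace ℝ (Fin n)) (h : EuclideanSpace ℝ (Fin ni)),
      ‖ContinuousLinearMap.adjoint U (gradient f (x + U h) - gradient f x)‖ ≤ L * ‖h‖)
    (hconv : ∀ x : EuclideanSpace ℝ (Fin n),
      ConvexOn ℝ Set.univ (fun d : EuclideanSpace ℝ (Fin ni) => ψ (x + U d)))
    (x : EuclideanSpace ℝ (Fin n)) (d : EuclideanSpace ℝ (Fin ni))
    (hmin : ∀ d' : EuclideanSpace ℝ (Fin ni),
      f x + ⟪ContinuousLinearMap.adjoint U (gradient f x), d⟫ + H / 2 * ‖d‖ ^ 2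
          + ψ (x + U d)
        ≤ f x + ⟪ContinuousLinearMap.adjoint U (gradient f x), d'⟫ + H / 2 * ‖d'‖ ^ 2
          + ψ (x + U d')) :
    f (x + U d) + ψ (x + U d) ≤ (f x + ψ x) - (H - L / 2) * ‖d‖ ^ 2 := by
  have hdiff : Differentiable ℝ f := hf.differentiable one_ne_zero
  have hdescent := le_add_inner_add_sq_of_norm_gradient_sub_le
    (fun h => hasGradientAt_comp_add_clm (hdiff _)) (fun h => by simpa using hLip x h) d
  have hprox := (hconv x).inner_add_sq_add_le_of_prox_minimizer
    (g := ContinuousLinearMap.adjoint U (gradient f x)) (d := d) (H := H)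
    fun d' => by linarith [hmin d']
  simp only [map_zero, add_zero] at hdescent hprox
  linarith

/-- Descent of the coordinate proximal gradient step when `ψ` is convex along
coordinates: if `d` minimizes the proximal subproblem with parameter `H > L/2`,
then `F(x + U d) ≤ F(x) - (H - L/2)‖d‖²` where `F = f + ψ`. -/
theorem stmt2 {n ni : ℕ} (f ψ : EuclideanSpace ℝ (Fin n) → ℝ)
    (hf : ContDiff ℝ 1 f) (hψ : Differentiable ℝ ψ)
    (U : EuclideanSpace ℝ (Fin ni) →L[ℝ] EuclideanSpace ℝ (Fin n))
    (L H : ℝ) (hL : 0 < L)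
    (hLip : ∀ (x : EuclideanSpace ℝ (Fin n)) (h : EuclideanSpace ℝ (Fin ni)),
      ‖ContinuousLinearMap.adjoint U (gradient f (x + U h) - gradient f x)‖ ≤ L * ‖h‖)
    (hconv : ∀ x : EuclideanSpace ℝ (Fin n),
      ConvexOn ℝ Set.univ (fun d : EuclideanSpace ℝ (Fin ni) => ψ (x + U d)))
    (hH : L / 2 < H)
    (x : EuclideanSpace ℝ (Fin n)) (d : EuclideanSpace ℝ (Fin ni))
    (hmin : ∀ d' : EuclideanSpace ℝ (Fin ni),
      f x + ⟪ContinuousLinearMap.adjoint U (gradient f x), d⟫ + H / 2 * ‖d‖ ^ 2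
          + ψ (x + U d)
        ≤ f x + ⟪ContinuousLinearMap.adjoint U (gradient f x), d'⟫ + H / 2 * ‖d'‖ ^ 2
          + ψ (x + U d')) :
    f (x + U d) + ψ (x + U d) ≤ (f x + ψ x) - (H - L / 2) * ‖d‖ ^ 2 :=
  stmt2_general f ψ hf U L H hLip hconv x d hmin
end

section
/- Let F = f + ψ where f has block coordinate-wise Lipschitz gradient with constants Lᵢ and ψ : ℝⁿ → ℝ is any continuous function. Fix an index i, a constant H > Lᵢ, a point x, and let d be a global minimizer of d ↦ f(x) + ⟨Uᵢᵀ∇f(x), d⟩ + (H/2)‖d‖² + ψ(x + Uᵢd) over ℝ^{nᵢ}. Then F(x + Uᵢd) ≤ F(x) − ((H − Lᵢ)/2)‖d‖². -/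
open scoped RealInnerProductSpace

/-! The block Lipschitz bound gives the descent lemma
`f (x + U d) ≤ f x + ⟪Uᵀ ∇f x, d⟫ + (L/2)‖d‖²`, by integrating the derivative of
`t ↦ f (x + t • U d)` over `[0, 1]`. Comparing the proximal objective at `d` with its value
at `0` gives `⟪Uᵀ ∇f x, d⟫ + (H/2)‖d‖² + ψ (x + U d) ≤ ψ x`, and adding the two inequalities
is the claim. -/

open Set

theorem le_add_deriv_add_half_of_deriv_le {φ φ' : ℝ → ℝ} {C : ℝ}
    (hφ : ∀ t, HasDerivAt φ (φ' t) t) (hle : ∀ t ∈ Icc (0 : ℝ) 1, φ' t ≤ φ' 0 + C * t) :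
    φ 1 ≤ φ 0 + φ' 0 + C / 2 := by
  set g : ℝ → ℝ := fun t => φ t - t * φ' 0 - C * t ^ 2 / 2
  have hg : ∀ t, HasDerivAt g (φ' t - φ' 0 - C * t) t := by
    intro t
    have hsq : HasDerivAt (fun s : ℝ => C * s ^ 2 / 2) (C * t) t :=
      (((hasDerivAt_pow 2 t).const_mul C).div_const 2).congr_deriv (by push_cast; ring)
    exact ((hφ t).sub ((hasDerivAt_id t).mul_const (φ' 0))).sub hsq |>.congr_deriv (by simp)
  have hg_diff : Differentiable ℝ g := fun t => (hg t).differentiableAt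
  have hanti : AntitoneOn g (Icc 0 1) := by
    refine antitoneOn_of_deriv_nonpos (convex_Icc 0 1) hg_diff.continuous.continuousOn
      hg_diff.differentiableOn fun t ht => ?_
    rw [interior_Icc] at ht
    rw [(hg t).deriv]
    linarith [hle t (Ioo_subset_Icc_self ht)]
  have := hanti (left_mem_Icc.2 zero_le_one) (right_mem_Icc.2 zero_le_one) zero_le_one
  simp only [g] at this
  linarith

section InnerProductSpace

variable {E F : Type*} [NormedAddCommGroup E] [InnerProductSpace ℝ E] [CompleteSpace E]
  [NormedAddCommGroup F] [InnerProductSpace ℝ F] [CompleteSpace F]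

theorem hasDerivAt_comp_add_smul {f : E → ℝ} {x v : E} {t : ℝ}
    (hf : DifferentiableAt ℝ f (x + t • v)) :
    HasDerivAt (fun s : ℝ => f (x + s • v)) ⟪gradient f (x + t • v), v⟫ t := by
  have hline : HasDerivAt (fun s : ℝ => x + s • v) v t := by
    simpa using ((hasDerivAt_id t).smul_const v).const_add x
  exact hf.hasGradientAt.hasFDerivAt.comp_hasDerivAt t hline

theorem le_add_inner_gradient_add_of_inner_gradient_sub_le {f : E → ℝ} (hf : Differentiable ℝ f)
    {x v : E} {C : ℝ}
    (hC : ∀ t ∈ Icc (0 : ℝ) 1, ⟪gradient f (x + t • v) - gradient f x, v⟫ ≤ C * t) :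
    f (x + v) ≤ f x + ⟪gradient f x, v⟫ + C / 2 := by
  have := le_add_deriv_add_half_of_deriv_le (φ := fun s : ℝ => f (x + s • v)) (C := C)
    (fun t => hasDerivAt_comp_add_smul (hf _)) fun t ht => by
      simpa only [zero_smul, add_zero, inner_sub_left, sub_le_iff_le_add'] using hC t ht
  simpa only [zero_smul, one_smul, add_zero] using this

theorem le_add_inner_adjoint_gradient_add_of_block_lipschitz {f : E → ℝ}
    (hf : Differentiable ℝ f) (U : F →L[ℝ] E) {L : ℝ} {x : E}
    (hLip : ∀ h : F, ‖U.adjoint (gradient f (x + U h) - gradient f x)‖ ≤ L * ‖h‖) (d : F) :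
    f (x + U d) ≤ f x + ⟪U.adjoint (gradient f x), d⟫ + L / 2 * ‖d‖ ^ 2 := by
  have key := le_add_inner_gradient_add_of_inner_gradient_sub_le hf (v := U d) (x := x)
    (C := L * ‖d‖ ^ 2) fun t ht => by
      calc ⟪gradient f (x + t • U d) - gradient f x, U d⟫
          = ⟪U.adjoint (gradient f (x + U (t • d)) - gradient f x), d⟫ := by
            rw [U.adjoint_inner_left, map_smul]
        _ ≤ ‖U.adjoint (gradient f (x + U (t • d)) - gradient f x)‖ * ‖d‖ :=
            real_inner_le_norm _ _
        _ ≤ L * ‖t • d‖ * ‖d‖ := by gcongr; exact hLip _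
        _ = L * ‖d‖ ^ 2 * t := by
            rw [norm_smul, Real.norm_eq_abs, abs_of_nonneg ht.1]; ring
  rw [← U.adjoint_inner_left] at key
  linarith

end InnerProductSpace

theorem stmt3_general {n ni : ℕ} (f ψ : EuclideanSpace ℝ (Fin n) → ℝ)
    (hf : ContDiff ℝ 1 f)
    (U : EuclideanSpace ℝ (Fin ni) →L[ℝ] EuclideanSpace ℝ (Fin n))
    (L H : ℝ)
    (hLip : ∀ (x : EuclideanSpace ℝ (Fin n)) (h : EuclideanSpace ℝ (Fin ni)),
      ‖ContinuousLinearMap.adjoint U (gradient f (x + U h) - gradient f x)‖ ≤ L * ‖h‖)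
    (x : EuclideanSpace ℝ (Fin n)) (d : EuclideanSpace ℝ (Fin ni))
    (hmin : ∀ d' : EuclideanSpace ℝ (Fin ni),
      f x + ⟪ContinuousLinearMap.adjoint U (gradient f x), d⟫ + H / 2 * ‖d‖ ^ 2
          + ψ (x + U d)
        ≤ f x + ⟪ContinuousLinearMap.adjoint U (gradient f x), d'⟫ + H / 2 * ‖d'‖ ^ 2
          + ψ (x + U d')) :
    f (x + U d) + ψ (x + U d) ≤ (f x + ψ x) - (H - L) / 2 * ‖d‖ ^ 2 := by
  have hdescent := le_add_inner_adjoint_gradient_add_of_block_lipschitz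
    (hf.differentiable one_ne_zero) U (hLip x) d
  have hopt := hmin 0
  simp only [inner_zero_right, norm_zero, map_zero, add_zero] at hopt
  linarith

/-- Descent of the coordinate proximal gradient step for general continuous `ψ`:
if `d` globally minimizes the proximal subproblem with parameter `H > L`, then
`F(x + U d) ≤ F(x) - ((H - L)/2)‖d‖²` where `F = f + ψ`. -/
theorem stmt3 {n ni : ℕ} (f ψ : EuclideanSpace ℝ (Fin n) → ℝ)
    (hf : ContDiff ℝ 1 f) (hψ : Continuous ψ)
    (U : EuclideanSpace ℝ (Fin ni) →L[ℝ] EuclideanSpace ℝ (Fin n))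
    (L H : ℝ) (hL : 0 < L)
    (hLip : ∀ (x : EuclideanSpace ℝ (Fin n)) (h : EuclideanSpace ℝ (Fin ni)),
      ‖ContinuousLinearMap.adjoint U (gradient f (x + U h) - gradient f x)‖ ≤ L * ‖h‖)
    (hH : L < H)
    (x : EuclideanSpace ℝ (Fin n)) (d : EuclideanSpace ℝ (Fin ni))
    (hmin : ∀ d' : EuclideanSpace ℝ (Fin ni),
      f x + ⟪ContinuousLinearMap.adjoint U (gradient f x), d⟫ + H / 2 * ‖d‖ ^ 2
          + ψ (x + U d)
        ≤ f x + ⟪ContinuousLinearMap.adjoint U (gradient f x), d'⟫ + H / 2 * ‖d'‖ ^ 2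
          + ψ (x + U d')) :
    f (x + U d) + ψ (x + U d) ≤ (f x + ψ x) - (H - L) / 2 * ‖d‖ ^ 2 :=
  stmt3_general f ψ hf U L H hLip x d hmin
end

section
/- Let f : ℝⁿ → ℝ have block coordinate-wise Lipschitz gradient with constants Lᵢ, and let ψ : ℝⁿ → ℝ be differentiable and concave along coordinates, i.e. ψ(x + Uᵢd) ≤ ψ(x) + ⟨Uᵢᵀ∇ψ(x), d⟩ for all d, x, i. Fix i, a point x, a constant H > Lᵢ/2, and set d = −(1/H)·Uᵢᵀ∇F(x) where F = f + ψ. Then F(x + Uᵢd) ≤ F(x) − (H − Lᵢ/2)‖d‖². -/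
/-! On the affine subspace `x + range U`, `f` has gradient `Uᵀ∇f(x + U ·)`, which is `L`-Lipschitz
at `0`; comparing `t ↦ f (x + t • U d)` on `[0, 1]` with the parabola whose slope is
`⟪Uᵀ∇f x, d⟫ + L t ‖d‖²` gives `f (x + U d) ≤ f x + ⟪Uᵀ∇f x, d⟫ + L/2 ‖d‖²`. Adding the concavity
bound for `ψ` and using `⟪Uᵀ∇F x, d⟫ = -H ‖d‖²` for the gradient step gives the descent. -/

open scoped RealInnerProductSpace
open Set ContinuousLinearMap

section

variable {E F : Type*} [NormedAddCommGroup E] [InnerProductSpace ℝ E] [CompleteSpace E]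
  [NormedAddCommGroup F] [InnerProductSpace ℝ F] [CompleteSpace F]

theorem HasGradientAt.comp_const_add_clm {f : E → ℝ} {g x : E} (U : F →L[ℝ] E) {h : F}
    (hf : HasGradientAt f g (x + U h)) :
    HasGradientAt (fun h ↦ f (x + U h)) (adjoint U g) h := by
  have hcomp : InnerProductSpace.toDual ℝ F (adjoint U g) =
      (InnerProductSpace.toDual ℝ E g).comp U := by
    ext v
    simp [adjoint_inner_left]
  rw [hasGradientAt_iff_hasFDerivAt, hcomp]
  exact (hasGradientAt_iff_hasFDerivAt.1 hf).comp h (U.hasFDerivAt.const_add x)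

theorem le_add_inner_add_sq_of_norm_sub_le {g : F → ℝ} {G : F → F} {L : ℝ} {x : F}
    (hg : ∀ y, HasGradientAt g (G y) y) (hG : ∀ y, ‖G y - G x‖ ≤ L * ‖y - x‖) (d : F) :
    g (x + d) ≤ g x + ⟪G x, d⟫ + L / 2 * ‖d‖ ^ 2 := by
  have hφ : ∀ t : ℝ, HasDerivAt (fun t ↦ g (x + t • d)) ⟪G (x + t • d), d⟫ t := by
    intro t
    have hpath : HasDerivAt (fun t : ℝ ↦ x + t • d) d t := by
      simpa using ((hasDerivAt_id t).smul_const d).const_add x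
    exact (hasGradientAt_iff_hasFDerivAt.1 (hg (x + t • d))).comp_hasDerivAt t hpath
  have hB : ∀ t : ℝ, HasDerivAt (fun t ↦ g x + t * ⟪G x, d⟫ + L / 2 * t ^ 2 * ‖d‖ ^ 2)
      (⟪G x, d⟫ + L * t * ‖d‖ ^ 2) t := by
    intro t
    refine ((((hasDerivAt_id' t).mul_const _).const_add (g x)).add
      (((hasDerivAt_pow 2 t).const_mul (L / 2)).mul_const _)).congr_deriv ?_
    push_cast
    ring
  have hslope : ∀ t ∈ Ico (0 : ℝ) 1, ⟪G (x + t • d), d⟫ ≤ ⟪G x, d⟫ + L * t * ‖d‖ ^ 2 := by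
    intro t ht
    calc ⟪G (x + t • d), d⟫ = ⟪G x, d⟫ + ⟪G (x + t • d) - G x, d⟫ := by
          rw [inner_sub_left]; ring
      _ ≤ ⟪G x, d⟫ + ‖G (x + t • d) - G x‖ * ‖d‖ := by gcongr; exact real_inner_le_norm _ _
      _ ≤ ⟪G x, d⟫ + L * ‖t • d‖ * ‖d‖ := by gcongr; simpa using hG (x + t • d)
      _ = ⟪G x, d⟫ + L * t * ‖d‖ ^ 2 := by rw [norm_smul, Real.norm_of_nonneg ht.1]; ring
  have := image_le_of_deriv_right_le_deriv_boundary
    (fun t _ ↦ (hφ t).continuousAt.continuousWithinAt) (fun t _ ↦ (hφ t).hasDerivWithinAt)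
    (by simp) (fun t _ ↦ (hB t).continuousAt.continuousWithinAt)
    (fun t _ ↦ (hB t).hasDerivWithinAt) hslope (right_mem_Icc.2 zero_le_one)
  simpa using this

theorem le_add_inner_adjoint_gradient_add {f : E → ℝ} (hf : Differentiable ℝ f) (U : F →L[ℝ] E)
    {L : ℝ} {x : E} (hLip : ∀ h, ‖adjoint U (gradient f (x + U h) - gradient f x)‖ ≤ L * ‖h‖)
    (d : F) : f (x + U d) ≤ f x + ⟪adjoint U (gradient f x), d⟫ + L / 2 * ‖d‖ ^ 2 := by
  simpa using le_add_inner_add_sq_of_norm_sub_le (x := 0)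
    (fun h ↦ (hf _).hasGradientAt.comp_const_add_clm U) (fun h ↦ by simpa using hLip h) d

end

theorem inner_neg_inv_smul_self {E : Type*} [NormedAddCommGroup E] [InnerProductSpace ℝ E]
    (H : ℝ) (v : E) : ⟪v, -(H⁻¹ • v)⟫ = -(H * ‖-(H⁻¹ • v)‖ ^ 2) := by
  rcases eq_or_ne H 0 with rfl | hH
  · simp
  · rw [inner_neg_right, real_inner_smul_right, real_inner_self_eq_norm_sq, norm_neg, norm_smul,
      Real.norm_eq_abs, mul_pow, sq_abs]
    field_simp

theorem stmt4_general {n ni : ℕ} (f ψ : EuclideanSpace ℝ (Fin n) → ℝ)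
    (hf : ContDiff ℝ 1 f)
    (U : EuclideanSpace ℝ (Fin ni) →L[ℝ] EuclideanSpace ℝ (Fin n))
    (L H : ℝ)
    (hLip : ∀ (x : EuclideanSpace ℝ (Fin n)) (h : EuclideanSpace ℝ (Fin ni)),
      ‖ContinuousLinearMap.adjoint U (gradient f (x + U h) - gradient f x)‖ ≤ L * ‖h‖)
    (hconc : ∀ (x : EuclideanSpace ℝ (Fin n)) (d : EuclideanSpace ℝ (Fin ni)),
      ψ (x + U d) ≤ ψ x + ⟪ContinuousLinearMap.adjoint U (gradient ψ x), d⟫)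
    (x : EuclideanSpace ℝ (Fin n)) (d : EuclideanSpace ℝ (Fin ni))
    (hd : d = -(H⁻¹ • ContinuousLinearMap.adjoint U (gradient f x + gradient ψ x))) :
    f (x + U d) + ψ (x + U d) ≤ (f x + ψ x) - (H - L / 2) * ‖d‖ ^ 2 := by
  have hstep : ⟪adjoint U (gradient f x), d⟫ + ⟪adjoint U (gradient ψ x), d⟫ = -(H * ‖d‖ ^ 2) := by
    rw [← inner_add_left, ← map_add, hd]
    exact inner_neg_inv_smul_self H _
  linarith [le_add_inner_adjoint_gradient_add (hf.differentiable one_ne_zero) U (hLip x) d,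
    hconc x d]

/-- Descent of the coordinate gradient step with constant stepsize when `ψ` is
concave along coordinates: with `d = -(1/H) Uᵀ∇F(x)` and `H > L/2`,
`F(x + U d) ≤ F(x) - (H - L/2)‖d‖²` where `F = f + ψ`. -/
theorem stmt4 {n ni : ℕ} (f ψ : EuclideanSpace ℝ (Fin n) → ℝ)
    (hf : ContDiff ℝ 1 f) (hψ : Differentiable ℝ ψ)
    (U : EuclideanSpace ℝ (Fin ni) →L[ℝ] EuclideanSpace ℝ (Fin n))
    (L H : ℝ) (hL : 0 < L)
    (hLip : ∀ (x : EuclideanSpace ℝ (Fin n)) (h : EuclideanSpace ℝ (Fin ni)),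
      ‖ContinuousLinearMap.adjoint U (gradient f (x + U h) - gradient f x)‖ ≤ L * ‖h‖)
    (hconc : ∀ (x : EuclideanSpace ℝ (Fin n)) (d : EuclideanSpace ℝ (Fin ni)),
      ψ (x + U d) ≤ ψ x + ⟪ContinuousLinearMap.adjoint U (gradient ψ x), d⟫)
    (hH : L / 2 < H)
    (x : EuclideanSpace ℝ (Fin n)) (d : EuclideanSpace ℝ (Fin ni))
    (hd : d = -(H⁻¹ • ContinuousLinearMap.adjoint U (gradient f x + gradient ψ x))) :
    f (x + U d) + ψ (x + U d) ≤ (f x + ψ x) - (H - L / 2) * ‖d‖ ^ 2 :=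
  stmt4_general f ψ hf U L H hLip hconc x d hd
end

section
/- Let ψ : ℝⁿ → ℝ be differentiable and uniformly convex of degree q ∈ (1,2) with modulus σ_q > 0, i.e. ψ(x) ≥ ψ(y) + ⟨∇ψ(y), x−y⟩ + (σ_q(q−1)/q)‖x−y‖^{q/(q−1)} for all x,y. Let f : ℝⁿ → ℝ satisfy f(x) − f(y) − ⟨∇f(y), x−y⟩ ≥ −(L/2)‖x−y‖² for all x,y, with L > 0. Let F = f + ψ, let x* be a minimizer of F (so ∇f(x*) + ∇ψ(x*) = 0), and let x₀ be any point. Then for every x with F(x) ≤ F(x₀): ‖x − x*‖ ≤ max{ ((2(F(x₀) − F(x*)) + L)·q / (2(q−1)σ_q))^{(q−1)/(2−q)}, 1 }. -/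
open scoped RealInnerProductSpace

/-!
Adding the uniform convexity inequality for `ψ` and the lower quadratic bound for `f` at the
critical point `x⋆`, the first-order terms cancel, so with `r = ‖x - x⋆‖` and
`D = F(x₀) - F(x⋆)` every point of the level set satisfies `c r ^ p ≤ D + (L / 2) r ^ 2`,
where `p = q / (q - 1) > 2`. For `r > 1` this gives `c r ^ (p - 2) ≤ D + L / 2`, and
`1 / (p - 2) = (q - 1) / (2 - q)`.
-/

theorem mul_norm_rpow_le_sub_add_of_gradient_add_eq_zero {E : Type*} [NormedAddCommGroup E]
    [InnerProductSpace ℝ E] [CompleteSpace E] {f ψ : E → ℝ} {c p L : ℝ} {x xstar : E}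
    (hψ : ψ x ≥ ψ xstar + ⟪gradient ψ xstar, x - xstar⟫ + c * ‖x - xstar‖ ^ p)
    (hf : f x - f xstar - ⟪gradient f xstar, x - xstar⟫ ≥ -(L / 2) * ‖x - xstar‖ ^ 2)
    (hcrit : gradient f xstar + gradient ψ xstar = 0) :
    c * ‖x - xstar‖ ^ p ≤ (f x + ψ x) - (f xstar + ψ xstar) + L / 2 * ‖x - xstar‖ ^ 2 := by
  have hinner : ⟪gradient f xstar, x - xstar⟫ + ⟪gradient ψ xstar, x - xstar⟫ = 0 := by
    rw [← inner_add_left, hcrit, inner_zero_left]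
  linarith

theorem le_max_rpow_inv_of_mul_rpow_le_add_mul_sq {r c p D K : ℝ} (hc : 0 < c) (hp : 2 < p)
    (hD : 0 ≤ D) (h : c * r ^ p ≤ D + K * r ^ 2) :
    r ≤ max (((D + K) / c) ^ (p - 2)⁻¹) 1 := by
  rcases le_or_gt r 1 with hr | hr
  · exact le_max_of_le_right hr
  refine le_max_of_le_left ?_
  have hr0 : 0 < r := one_pos.trans hr
  have hsq : 0 < r ^ 2 := by positivity
  have hsplit : r ^ p = r ^ (p - 2) * r ^ 2 := by
    rw [← Real.rpow_natCast r 2, ← Real.rpow_add hr0]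
    norm_num
  have hDsq : D ≤ D * r ^ 2 := le_mul_of_one_le_right hD (one_le_pow₀ hr.le)
  have hcr : c * r ^ (p - 2) ≤ D + K := by
    refine le_of_mul_le_mul_right ?_ hsq
    rw [hsplit] at h
    linarith
  have hDK : 0 ≤ D + K := le_trans (by positivity) hcr
  rw [Real.le_rpow_inv_iff_of_pos hr0.le (div_nonneg hDK hc.le) (by linarith), le_div_iff₀ hc]
  linarith

theorem stmt8_general {n : ℕ} (f ψ : EuclideanSpace ℝ (Fin n) → ℝ)
    (q σq L : ℝ) (hq : q ∈ Set.Ioo (1:ℝ) 2) (hσ : 0 < σq)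
    (huc : ∀ x y : EuclideanSpace ℝ (Fin n),
      ψ x ≥ ψ y + ⟪gradient ψ y, x - y⟫ + σq * (q - 1) / q * ‖x - y‖ ^ (q / (q - 1)))
    (hlow : ∀ x y : EuclideanSpace ℝ (Fin n),
      f x - f y - ⟪gradient f y, x - y⟫ ≥ -(L / 2) * ‖x - y‖ ^ 2)
    (xstar x₀ : EuclideanSpace ℝ (Fin n))
    (hmin : ∀ y, f xstar + ψ xstar ≤ f y + ψ y)
    (hcrit : gradient f xstar + gradient ψ xstar = 0) :
    ∀ x : EuclideanSpace ℝ (Fin n), f x + ψ x ≤ f x₀ + ψ x₀ →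
      ‖x - xstar‖ ≤ max
        (((2 * ((f x₀ + ψ x₀) - (f xstar + ψ xstar)) + L) * q / (2 * (q - 1) * σq))
          ^ ((q - 1) / (2 - q))) 1 := by
  obtain ⟨hq1, hq2⟩ := hq
  have hq1' : 0 < q - 1 := by linarith
  intro x hx
  have hgrowth := mul_norm_rpow_le_sub_add_of_gradient_add_eq_zero (huc x xstar) (hlow x xstar) hcrit
  have hp : 2 < q / (q - 1) := by rw [lt_div_iff₀ hq1']; linarith
  have hbound := le_max_rpow_inv_of_mul_rpow_le_add_mul_sq (K := L / 2)
    (by positivity : 0 < σq * (q - 1) / q) hp (sub_nonneg.mpr (hmin x₀))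
    (hgrowth.trans (by linarith))
  have hexp : (q / (q - 1) - 2)⁻¹ = (q - 1) / (2 - q) := by
    rw [div_sub' hq1'.ne', inv_div]
    ring
  have hconst : (f x₀ + ψ x₀ - (f xstar + ψ xstar) + L / 2) / (σq * (q - 1) / q)
      = (2 * ((f x₀ + ψ x₀) - (f xstar + ψ xstar)) + L) * q / (2 * (q - 1) * σq) := by
    field_simp
  rwa [hexp, hconst] at hbound

/-- Bound on the level set of `F = f + ψ` when `ψ` is uniformly convex of degree
`q ∈ (1,2)` and `f` satisfies a lower quadratic bound. -/
theorem stmt8 {n : ℕ} (f ψ : EuclideanSpace ℝ (Fin n) → ℝ)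
    (hf : Differentiable ℝ f) (hψ : Differentiable ℝ ψ)
    (q σq L : ℝ) (hq : q ∈ Set.Ioo (1:ℝ) 2) (hσ : 0 < σq) (hL : 0 < L)
    (huc : ∀ x y : EuclideanSpace ℝ (Fin n),
      ψ x ≥ ψ y + ⟪gradient ψ y, x - y⟫ + σq * (q - 1) / q * ‖x - y‖ ^ (q / (q - 1)))
    (hlow : ∀ x y : EuclideanSpace ℝ (Fin n),
      f x - f y - ⟪gradient f y, x - y⟫ ≥ -(L / 2) * ‖x - y‖ ^ 2)
    (xstar x₀ : EuclideanSpace ℝ (Fin n))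
    (hmin : ∀ y, f xstar + ψ xstar ≤ f y + ψ y)
    (hcrit : gradient f xstar + gradient ψ xstar = 0) :
    ∀ x : EuclideanSpace ℝ (Fin n), f x + ψ x ≤ f x₀ + ψ x₀ →
      ‖x - xstar‖ ≤ max
        (((2 * ((f x₀ + ψ x₀) - (f xstar + ψ xstar)) + L) * q / (2 * (q - 1) * σq))
          ^ ((q - 1) / (2 - q))) 1 :=
  stmt8_general f ψ q σq L hq hσ huc hlow xstar x₀ hmin hcrit
end

section
/- Let (θ_k)_{k≥k₀} be a sequence of nonnegative reals satisfying θ_{k+1} ≤ θ_k − θ_k^{2/q} for all k ≥ k₀, where q ∈ (1,2). Then for all k > k₀: θ_k ≤ (ζ(k − k₀))^{−1/ζ}, where ζ = (2−q)/q > 0. -/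
/-!
With `ζ = 2/q - 1`, the recurrence reads `θ_{k+1} ≤ θ_k (1 - u)` with `u = θ_k^ζ`, and
the Bernoulli-type bound `(1 - u)^{-ζ} ≥ 1 + ζ u` (from `log (1 - u) ≤ -u` and `exp t ≥ 1 + t`)
gives `θ_{k+1}^{-ζ} ≥ θ_k^{-ζ} + ζ`. Hence `θ_k^{-ζ} ≥ ζ (k - k₀)`, which inverts to the rate;
a vanishing term forces all later terms to vanish, where the bound is trivial.
-/

open Real

theorem one_add_mul_le_one_sub_rpow_neg {u ζ : ℝ} (hu : u < 1) (hζ : 0 ≤ ζ) :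
    1 + ζ * u ≤ (1 - u) ^ (-ζ) := by
  have hpos : 0 < 1 - u := by linarith
  have hlog : u ≤ -log (1 - u) := by linarith [log_le_sub_one_of_pos hpos]
  calc 1 + ζ * u ≤ log (1 - u) * -ζ + 1 := by nlinarith
    _ ≤ exp (log (1 - u) * -ζ) := add_one_le_exp _
    _ = (1 - u) ^ (-ζ) := (rpow_def_of_pos hpos _).symm

theorem rpow_neg_add_le_rpow_neg_of_le_sub_rpow {ζ x y : ℝ} (hζ : 0 ≤ ζ) (hx : 0 < x)
    (hy : 0 < y) (hle : y ≤ x - x ^ (1 + ζ)) : x ^ (-ζ) + ζ ≤ y ^ (-ζ) := by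
  set u := x ^ ζ
  have hsplit : x ^ (1 + ζ) = x * u := by rw [rpow_add hx, rpow_one]
  have hyu : y ≤ x * (1 - u) := by rw [hsplit] at hle; linarith
  have hu : u < 1 := by nlinarith
  have hxu : x ^ (-ζ) * u = 1 := by rw [← rpow_add hx]; simp
  calc x ^ (-ζ) + ζ = x ^ (-ζ) * (1 + ζ * u) := by linear_combination -ζ * hxu
    _ ≤ x ^ (-ζ) * (1 - u) ^ (-ζ) := by
      gcongr
      exact one_add_mul_le_one_sub_rpow_neg hu hζ
    _ = (x * (1 - u)) ^ (-ζ) := (mul_rpow hx.le (by linarith)).symm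
    _ ≤ y ^ (-ζ) := rpow_le_rpow_of_nonpos hy hyu (by linarith)

theorem eq_zero_or_mul_sub_le_rpow_neg {θ : ℕ → ℝ} {k₀ : ℕ} {ζ : ℝ} (hζ : 0 ≤ ζ)
    (hnonneg : ∀ k, 0 ≤ θ k) (hrec : ∀ k, k₀ ≤ k → θ (k + 1) ≤ θ k - θ k ^ (1 + ζ))
    {k : ℕ} (hk : k₀ ≤ k) : θ k = 0 ∨ ζ * ((k : ℝ) - k₀) ≤ θ k ^ (-ζ) := by
  induction k, hk using Nat.le_induction with
  | base => exact .inr (by simpa using rpow_nonneg (hnonneg k₀) _)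
  | succ k hk ih =>
    rcases (hnonneg (k + 1)).eq_or_lt' with hzero | hpos
    · exact .inl hzero
    right
    have hθk : 0 < θ k := by
      by_contra! h
      have h0 : θ k = 0 := le_antisymm h (hnonneg k)
      have := hrec k hk
      rw [h0, zero_rpow (by positivity)] at this
      linarith
    have hstep := rpow_neg_add_le_rpow_neg_of_le_sub_rpow hζ hθk hpos (hrec k hk)
    have ih := ih.resolve_left hθk.ne'
    push_cast
    linarith

theorem le_mul_sub_rpow_of_le_sub_rpow {θ : ℕ → ℝ} {k₀ : ℕ} {ζ : ℝ} (hζ : 0 < ζ)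
    (hnonneg : ∀ k, 0 ≤ θ k) (hrec : ∀ k, k₀ ≤ k → θ (k + 1) ≤ θ k - θ k ^ (1 + ζ))
    {k : ℕ} (hk : k₀ < k) : θ k ≤ (ζ * ((k : ℝ) - k₀)) ^ (-(1 / ζ)) := by
  have hbound : 0 < ζ * ((k : ℝ) - k₀) := mul_pos hζ (sub_pos.mpr (by exact_mod_cast hk))
  rcases eq_zero_or_mul_sub_le_rpow_neg hζ.le hnonneg hrec hk.le with h0 | h
  · rw [h0]
    exact (rpow_pos_of_pos hbound _).le
  calc θ k = (θ k ^ (-ζ)) ^ (-(1 / ζ)) := by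
        rw [← rpow_mul (hnonneg k), neg_mul_neg, mul_one_div_cancel hζ.ne', rpow_one]
    _ ≤ (ζ * ((k : ℝ) - k₀)) ^ (-(1 / ζ)) :=
        rpow_le_rpow_of_nonpos hbound h (by simp [hζ.le])

/-- Recurrence `θ_{k+1} ≤ θ_k - θ_k^{2/q}` with `q ∈ (1,2)` yields the sublinear
rate `θ_k ≤ (ζ (k - k₀))^{-1/ζ}` with `ζ = (2-q)/q`. -/
theorem stmt10 (θ : ℕ → ℝ) (k₀ : ℕ) (q : ℝ) (hq : q ∈ Set.Ioo (1:ℝ) 2)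
    (hnonneg : ∀ k, 0 ≤ θ k)
    (hrec : ∀ k, k₀ ≤ k → θ (k + 1) ≤ θ k - θ k ^ (2 / q)) :
    ∀ k, k₀ < k →
      θ k ≤ ((2 - q) / q * ((k : ℝ) - (k₀ : ℝ))) ^ (-(1 / ((2 - q) / q))) := by
  obtain ⟨hq1, hq2⟩ := hq
  have hζ : 0 < (2 - q) / q := div_pos (by linarith) (by linarith)
  have hexp : 2 / q = 1 + (2 - q) / q := by field_simp; ring
  rw [hexp] at hrec
  exact fun k hk ↦ le_mul_sub_rpow_of_le_sub_rpow hζ hnonneg hrec hk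
end
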